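/- Structural completeness of the logic of F_n: let n ≥ 1 and let φ, ψ be formulas. Suppose that for every substitution σ (a map from propositional variables to formulas, extended homomorphically to all formulas), if σ(φ) is validated at the root of F_n then σ(ψ) is validated at the root of F_n. Then φ → ψ is validated at the root of F_n. -/

import Mathlib

/-- Formulas of intuitionistic propositional logic, built from propositional
variables `p_0, p_1, …` (indexed by `ℕ`) and `⊥` using `∧`, `∨`, `→`. -/
inductive Form : Type
  | var : ℕ → Form
  | bot : Form
  | and : Form → Form → Form
  | or : Form → Form → Form
  | imp : Form → Form → Form
  deriving DecidableEq

namespace Form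

/-- `¬α` abbreviates `α → ⊥`. -/
def neg (φ : Form) : Form := φ.imp .bot

/-- `⊤` abbreviates `⊥ → ⊥`. -/
def top : Form := Form.bot.imp .bot

/-- The set of propositional variables occurring in a formula. -/
def vars : Form → Set ℕ
  | var p => {p}
  | bot => ∅
  | and φ ψ => φ.vars ∪ ψ.vars
  | or φ ψ => φ.vars ∪ ψ.vars
  | imp φ ψ => φ.vars ∪ ψ.vars

/-- Uniform substitution, extended homomorphically to all formulas. -/
def subst (σ : ℕ → Form) : Form → Form
  | var p => σ p
  | bot => bot
  | and φ ψ => (φ.subst σ).and (ψ.subst σ)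
  | or φ ψ => (φ.subst σ).or (ψ.subst σ)
  | imp φ ψ => (φ.subst σ).imp (ψ.subst σ)

end Form

/-- A valuation `V` on a poset is intuitionistic when every `V p` is upward closed. -/
def IsVal {P : Type} [PartialOrder P] (V : ℕ → Set P) : Prop :=
  ∀ p, ∀ x y : P, x ≤ y → x ∈ V p → y ∈ V p

/-- The standard Kripke forcing relation for intuitionistic propositional logic. -/
def forces {P : Type} [PartialOrder P] (V : ℕ → Set P) : P → Form → Prop
  | w, .var p => w ∈ V p
  | _, .bot => False
  | w, .and φ ψ => forces V w φ ∧ forces V w ψ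
  | w, .or φ ψ => forces V w φ ∨ forces V w ψ
  | w, .imp φ ψ => ∀ v, w ≤ v → forces V v φ → forces V v ψ

/-- A point `w` of a poset validates `φ` if `φ` is forced at `w` under every
intuitionistic valuation. -/
def valid {P : Type} [PartialOrder P] (w : P) (φ : Form) : Prop :=
  ∀ V : ℕ → Set P, IsVal V → forces V w φ

/-- Semantic consequence at a point: `Γ ⊨_{P,w} φ`. -/
def Conseq {P : Type} [PartialOrder P] (Γ : Set Form) (w : P) (φ : Form) : Prop :=
  ∀ V : ℕ → Set P, IsVal V → (∀ γ ∈ Γ, forces V w γ) → forces V w φ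

/-- The n-Medvedev frame: nonempty subsets of `{0,…,n−1}`. -/
def Med (n : ℕ) : Type := {X : Finset (Fin n) // X.Nonempty}

/-- The order on the n-Medvedev frame is reverse inclusion `⊇`. -/
instance (n : ℕ) : PartialOrder (Med n) where
  le X Y := Y.1 ⊆ X.1
  le_refl X := Finset.Subset.refl _
  le_trans X Y Z h1 h2 := Finset.Subset.trans h2 h1
  le_antisymm X Y h1 h2 := Subtype.ext (Finset.Subset.antisymm h2 h1)

instance (n : ℕ) : Fintype (Med n) :=
  inferInstanceAs (Fintype {X : Finset (Fin n) // X.Nonempty})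

/-- The root (least element) of the n-Medvedev frame: the full set `{0,…,n−1}`. -/
def root (n : ℕ) (hn : 1 ≤ n) : Med n := ⟨Finset.univ, ⟨⟨0, hn⟩, Finset.mem_univ _⟩⟩

/-- `endSet w` is the set of end points (maximal elements) above `w`. -/
def endSet {P : Type} [PartialOrder P] (w : P) : Set P := {e | IsMax e ∧ w ≤ e}

/-- Finite disjunction `⋁_{i} F i` (the empty disjunction is `⊥`). -/
def bigDisj (n : ℕ) (F : Fin n → Form) : Form :=
  (List.finRange n).foldr (fun i acc => (F i).or acc) .bot

/-- `λ_i = p_i ∧ ⋀_{j ≠ i} ¬ p_j`, for a choice `p : Fin n → ℕ` of variables. -/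
def lam (n : ℕ) (p : Fin n → ℕ) (i : Fin n) : Form :=
  (Form.var (p i)).and
    (((List.finRange n).filter (fun j => j ≠ i)).foldr
      (fun j acc => ((Form.var (p j)).neg).and acc) Form.top)

/-- A Hilbert-style axiomatization of intuitionistic propositional logic. -/
inductive IPC : Form → Prop
  | ax1 (φ ψ : Form) : IPC (φ.imp (ψ.imp φ))
  | ax2 (φ ψ χ : Form) : IPC ((φ.imp (ψ.imp χ)).imp ((φ.imp ψ).imp (φ.imp χ)))
  | andI (φ ψ : Form) : IPC (φ.imp (ψ.imp (φ.and ψ)))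
  | andE1 (φ ψ : Form) : IPC ((φ.and ψ).imp φ)
  | andE2 (φ ψ : Form) : IPC ((φ.and ψ).imp ψ)
  | orI1 (φ ψ : Form) : IPC (φ.imp (φ.or ψ))
  | orI2 (φ ψ : Form) : IPC (ψ.imp (φ.or ψ))
  | orE (φ ψ χ : Form) : IPC ((φ.imp χ).imp ((ψ.imp χ).imp ((φ.or ψ).imp χ)))
  | botE (φ : Form) : IPC (Form.bot.imp φ)
  | mp {φ ψ : Form} : IPC (φ.imp ψ) → IPC φ → IPC ψ

/-- The Kreisel–Putnam formula `(¬p → q ∨ r) → ((¬p → q) ∨ (¬p → r))`. -/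
def kpForm : Form :=
  ((Form.var 0).neg.imp ((Form.var 1).or (Form.var 2))).imp
    (((Form.var 0).neg.imp (Form.var 1)).or ((Form.var 0).neg.imp (Form.var 2)))

/-- The bounded-depth formulas: `bd_1 = p_1 ∨ (p_1 → ⊥)`,
`bd_{k+1} = p_{k+1} ∨ (p_{k+1} → bd_k)`. -/
def bd : ℕ → Form
  | 0 => .bot
  | k + 1 => (Form.var (k + 1)).or ((Form.var (k + 1)).imp (bd k))

/-- `ML_n`: the smallest set of formulas containing all theorems of intuitionistic
propositional logic and all substitution instances of `kp` and `bd_n`, closed under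
modus ponens, uniform substitution, and the Gabbay-style rule `Ed_n`. -/
inductive MLn (n : ℕ) : Form → Prop
  | ipc {φ : Form} : IPC φ → MLn n φ
  | kp : MLn n kpForm
  | bdn : MLn n (bd n)
  | mp {φ ψ : Form} : MLn n (φ.imp ψ) → MLn n φ → MLn n ψ
  | subst {φ : Form} (σ : ℕ → Form) : MLn n φ → MLn n (φ.subst σ)
  | ed {α β : Form} (p : Fin n → ℕ) : Function.Injective p →
      (∀ i, p i ∉ α.vars ∧ p i ∉ β.vars) →
      MLn n (α.imp (β.or (bigDisj n fun i => (lam n p i).neg))) →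
      MLn n (α.imp β)

/-- `Γ ⊢_n φ`: there are finitely many `γ_1, …, γ_k ∈ Γ` with
`(γ_1 ∧ … ∧ γ_k) → φ ∈ ML_n`. -/
def Proves (n : ℕ) (Γ : Set Form) (φ : Form) : Prop :=
  ∃ l : List Form, (∀ γ ∈ l, γ ∈ Γ) ∧ MLn n ((l.foldr Form.and Form.top).imp φ)

/-- Disjunction `⋁_{i ∈ I} F i` over a finite set of indices. -/
def disjOver {n : ℕ} (I : Finset (Fin n)) (F : Fin n → Form) : Form :=
  ((List.finRange n).filter (fun i => i ∈ I)).foldr (fun i acc => (F i).or acc) .bot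

/-- `α_I = ¬¬ ⋁_{i ∈ I} α_i`. -/
def alphaI {n : ℕ} (I : Finset (Fin n)) (α : Fin n → Form) : Form :=
  ((disjOver I α).neg).neg

open Classical in
/-- `α_S = ⋁_{I ∈ S} α_I` for a set `S` of points of the n-Medvedev frame
(with `α_∅ = ⊥`). -/
noncomputable def alphaS {n : ℕ} (S : Set (Med n)) (α : Fin n → Form) : Form :=
  ((Finset.univ : Finset (Med n)).filter (fun I => I ∈ S)).toList.foldr
    (fun I acc => (alphaI I.1 α).or acc) .bot

-- ====== auxiliary development ======
namespace S17
open Form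

lemma persist {P : Type} [PartialOrder P] {V : ℕ → Set P} (hV : IsVal V) :
    ∀ (χ : Form) {x y : P}, x ≤ y → forces V x χ → forces V y χ
  | .var p, x, y, h, hf => hV p x y h hf
  | .bot, _, _, _, hf => hf.elim
  | .and a b, x, y, h, hf => ⟨persist hV a h hf.1, persist hV b h hf.2⟩
  | .or a b, x, y, h, hf => hf.elim (fun hh => Or.inl (persist hV a h hh))
      (fun hh => Or.inr (persist hV b h hh))
  | .imp a b, x, y, h, hf => fun v hv ha => hf v (le_trans h hv) ha

lemma transfer {P Q : Type} [PartialOrder P] [PartialOrder Q] (g : P → Q)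
    (W : ℕ → Set P) (V : ℕ → Set Q)
    (mono : ∀ {x y : P}, x ≤ y → g x ≤ g y)
    (atoms : ∀ p x, x ∈ W p ↔ g x ∈ V p)
    (back : ∀ (x : P) (v : Q), g x ≤ v → ∃ y, x ≤ y ∧ g y = v) :
    ∀ (χ : Form) (x : P), forces W x χ ↔ forces V (g x) χ := by
  intro χ
  induction χ with
  | var p => intro x; exact atoms p x
  | bot => intro x; exact Iff.rfl
  | and a b iha ihb => intro x; exact and_congr (iha x) (ihb x)
  | or a b iha ihb => intro x; exact or_congr (iha x) (ihb x)
  | imp a b iha ihb =>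
    intro x
    constructor
    · intro hf v hv ha
      obtain ⟨y, hy, rfl⟩ := back x v hv
      exact (ihb y).1 (hf y hy ((iha y).2 ha))
    · intro hf y hy ha
      exact (ihb y).2 (hf (g y) (mono hy) ((iha y).1 ha))

lemma forces_subst {P : Type} [PartialOrder P] (V : ℕ → Set P) (σ : ℕ → Form) :
    ∀ (χ : Form) (w : P),
      forces V w (χ.subst σ) ↔ forces (fun p => {v | forces V v (σ p)}) w χ
  | .var p, w => Iff.rfl
  | .bot, w => Iff.rfl
  | .and a b, w => and_congr (forces_subst V σ a w) (forces_subst V σ b w)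
  | .or a b, w => or_congr (forces_subst V σ a w) (forces_subst V σ b w)
  | .imp a b, w => forall_congr' fun v => imp_congr_right fun _ =>
      imp_congr (forces_subst V σ a v) (forces_subst V σ b v)


-- ===== Medvedev frame specifics =====
variable {n : ℕ}

lemma med_le {x y : Med n} : x ≤ y ↔ y.1 ⊆ x.1 := Iff.rfl

def sing (a : Fin n) : Med n := ⟨{a}, ⟨a, Finset.mem_singleton_self a⟩⟩

lemma le_sing {J : Med n} {a : Fin n} (ha : a ∈ J.1) : J ≤ sing a := by
  rw [med_le]
  simpa [sing] using ha

lemma eq_of_sing_le {a : Fin n} {K : Med n} (h : sing a ≤ K) : K = sing a := by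
  rw [med_le] at h
  rcases Finset.subset_singleton_iff.1 h with h0 | h1
  · exact absurd h0 (Finset.nonempty_iff_ne_empty.1 K.2)
  · exact Subtype.ext h1

def bigOr' (l : List Form) : Form := l.foldr .or .bot
def bigAnd' (l : List Form) : Form := l.foldr .and .top
def dn (χ : Form) : Form := χ.neg.neg

section forcesLemmas
variable {P : Type} [PartialOrder P] {V : ℕ → Set P}

lemma forces_top (w : P) : forces V w Form.top := fun _ _ hb => hb

lemma forces_bigOr {w : P} {l : List Form} :
    forces V w (bigOr' l) ↔ ∃ χ ∈ l, forces V w χ := by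
  induction l with
  | nil => simp [bigOr', forces]
  | cons a l ih =>
    have h0 : forces V w (bigOr' (a :: l)) ↔ forces V w a ∨ forces V w (bigOr' l) := Iff.rfl
    rw [h0, ih]; simp

lemma forces_bigAnd {w : P} {l : List Form} :
    forces V w (bigAnd' l) ↔ ∀ χ ∈ l, forces V w χ := by
  induction l with
  | nil => simp [bigAnd', forces_top]
  | cons a l ih =>
    have h0 : forces V w (bigAnd' (a :: l)) ↔ forces V w a ∧ forces V w (bigAnd' l) := Iff.rfl
    rw [h0, ih]; simp

lemma forces_and {w : P} {a b : Form} :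
    forces V w (Form.and a b) ↔ forces V w a ∧ forces V w b := Iff.rfl

lemma forces_neg {w : P} {χ : Form} :
    forces V w χ.neg ↔ ∀ v, w ≤ v → ¬ forces V v χ := Iff.rfl

lemma forces_dn {w : P} {χ : Form} :
    forces V w (dn χ) ↔ ∀ v, w ≤ v → ¬ forces V v χ.neg := Iff.rfl

end forcesLemmas

/-- θ_i = (⋀_{j<i} ¬¬ q_j) ∧ (¬ q_i, omitted for i = n-1). -/
def theta (n : ℕ) (i : Fin n) : Form :=
  Form.and (bigAnd' ((List.range i.1).map fun j => dn (.var j)))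
    (if i.1 = n - 1 then .top else (Form.var i.1).neg)

/-- canonical valuation: q_j holds exactly on sets all of whose elements exceed j -/
def U0 (n : ℕ) : ℕ → Set (Med n) := fun j => {K | ∀ a ∈ K.1, j < (a : ℕ)}

lemma isVal_U0 : IsVal (U0 n) := by
  intro p x y hxy hx a ha
  exact hx a (hxy ha)

lemma forces_theta_U0 {i : Fin n} {K : Med n} :
    forces (U0 n) K (theta n i) ↔ K = sing i := by
  constructor
  · rintro ⟨hA, hB⟩
    rw [forces_bigAnd] at hA
    have key : ∀ a ∈ K.1, a = i := by
      intro a ha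
      have h1 : ¬ ((a : ℕ) < i.1) := by
        intro hlt
        have hdn : forces (U0 n) K (dn (.var (a : ℕ))) :=
          hA _ (List.mem_map_of_mem (List.mem_range.2 hlt))
        refine hdn (sing a) (le_sing ha) ?_
        intro u hu hmem
        have := eq_of_sing_le hu
        subst this
        exact absurd (hmem a (by simp [sing])) (lt_irrefl _)
      have h2 : (a : ℕ) ≤ i.1 := by
        by_cases hi : i.1 = n - 1
        · omega
        · rw [if_neg hi] at hB
          by_contra hgt
          push_neg at hgt
          exact hB (sing a) (le_sing ha) (fun b hb => by
            simp only [sing, Finset.mem_singleton] at hb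
            subst hb; exact hgt)
      exact Fin.ext (by omega)
    have : K.1 ⊆ {i} := fun a ha => Finset.mem_singleton.2 (key a ha)
    rcases Finset.subset_singleton_iff.1 this with h0 | h1
    · exact absurd h0 (Finset.nonempty_iff_ne_empty.1 K.2)
    · exact Subtype.ext h1
  · rintro rfl
    constructor
    · rw [forces_bigAnd]
      intro χ hχ
      rw [List.mem_map] at hχ
      obtain ⟨j, hj, rfl⟩ := hχ
      rw [List.mem_range] at hj
      intro v hv hneg
      have := eq_of_sing_le hv; subst this
      exact hneg _ (le_refl _) (fun b hb => by
        simp only [sing, Finset.mem_singleton] at hb; subst hb; exact hj)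
    · by_cases hi : i.1 = n - 1
      · rw [if_pos hi]; exact forces_top _
      · rw [if_neg hi]
        intro u hu hmem
        have := eq_of_sing_le hu; subst this
        exact absurd (hmem i (by simp [sing])) (lt_irrefl _)

/-- exclusivity -/
lemma theta_excl {U : ℕ → Set (Med n)} {K : Med n} {i j : Fin n}
    (hi : forces U K (theta n i)) (hj : forces U K (theta n j)) : i = j := by
  have aux : ∀ {i j : Fin n}, i.1 < j.1 → forces U K (theta n i) → forces U K (theta n j) → False := by
    intro i j hlt ⟨_, hBi⟩ ⟨hAj, _⟩
    rw [forces_bigAnd] at hAj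
    have hdn : forces U K (dn (.var i.1)) :=
      hAj _ (List.mem_map_of_mem (List.mem_range.2 hlt))
    have hne : i.1 ≠ n - 1 := by have := j.2; omega
    rw [if_neg hne] at hBi
    exact hdn K (le_refl _) hBi
  rcases lt_trichotomy i.1 j.1 with h | h | h
  · exact absurd (aux h hi hj) not_false
  · exact Fin.ext h
  · exact absurd (aux h hj hi) not_false

/-- liveness -/
lemma theta_live (U : ℕ → Set (Med n)) (J : Med n) :
    ∃ (i : Fin n) (K : Med n), J ≤ K ∧ forces U K (theta n i) := by
  classical
  obtain ⟨a, ha⟩ := J.2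
  set e := sing a with he
  have hle : J ≤ e := le_sing ha
  have hpos : 0 < n := a.pos
  have hstep : ∀ j : ℕ, e ∈ U j → forces U e (dn (.var j)) := by
    intro j hj v hv hneg
    have := eq_of_sing_le hv; subst this
    exact hneg _ (le_refl _) hj
  by_cases hall : ∀ j : ℕ, j < n - 1 → e ∈ U j
  · refine ⟨⟨n - 1, by omega⟩, e, hle, ?_⟩
    unfold theta
    rw [forces_and]
    constructor
    · rw [forces_bigAnd]
      intro χ hχ
      rw [List.mem_map] at hχ
      obtain ⟨j, hj, rfl⟩ := hχ
      rw [List.mem_range] at hj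
      exact hstep j (hall j hj)
    · rw [if_pos rfl]; exact forces_top _
  · push_neg at hall
    have hex : ∃ j, j < n - 1 ∧ e ∉ U j := hall
    set m := Nat.find hex with hm
    obtain ⟨hmlt, hmnot⟩ := Nat.find_spec hex
    refine ⟨⟨m, by omega⟩, e, hle, ?_⟩
    unfold theta
    rw [forces_and]
    constructor
    · rw [forces_bigAnd]
      intro χ hχ
      rw [List.mem_map] at hχ
      obtain ⟨j, hj, rfl⟩ := hχ
      rw [List.mem_range] at hj
      have hj2 : j < m := hj
      have : e ∈ U j := by
        by_contra hnot
        have hp : j < n - 1 ∧ e ∉ U j := ⟨by omega, hnot⟩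
        have hle2 := Nat.find_min' hex hp
        rw [← hm] at hle2
        omega
      exact hstep j this
    · have : (m : ℕ) ≠ n - 1 := by omega
      rw [if_neg this]
      intro u hu hmem
      have := eq_of_sing_le hu; subst this
      exact hmnot hmem

open Classical in
/-- f_U(J) = set of i such that some refinement of J forces θ_i -/
noncomputable def fs (U : ℕ → Set (Med n)) (J : Med n) : Finset (Fin n) :=
  Finset.univ.filter (fun i => ∃ K, J ≤ K ∧ forces U K (theta n i))

lemma mem_fs {U : ℕ → Set (Med n)} {J : Med n} {i : Fin n} :
    i ∈ fs U J ↔ ∃ K, J ≤ K ∧ forces U K (theta n i) := by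
  simp [fs]

lemma fs_nonempty (U : ℕ → Set (Med n)) (J : Med n) : (fs U J).Nonempty := by
  obtain ⟨i, K, hK, hf⟩ := theta_live U J
  exact ⟨i, mem_fs.2 ⟨K, hK, hf⟩⟩

noncomputable def hmap (U : ℕ → Set (Med n)) (J : Med n) : Med n :=
  ⟨fs U J, fs_nonempty U J⟩

lemma fs_mono {U : ℕ → Set (Med n)} {x y : Med n} (h : x ≤ y) : fs U y ⊆ fs U x := by
  intro i hi
  obtain ⟨K, hK, hf⟩ := mem_fs.1 hi
  exact mem_fs.2 ⟨K, le_trans h hK, hf⟩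

lemma hmap_mono {U : ℕ → Set (Med n)} {x y : Med n} (h : x ≤ y) : hmap U x ≤ hmap U y :=
  fs_mono h

/-- characterization of ¬¬⋁_{i∈I} θ_i -/
lemma forces_alpha {U : ℕ → Set (Med n)} (hU : IsVal U) (J : Med n) (I : Finset (Fin n)) :
    forces U J (dn (bigOr' (I.toList.map (theta n)))) ↔ fs U J ⊆ I := by
  constructor
  · intro hf i hi
    obtain ⟨K, hK, hθ⟩ := mem_fs.1 hi
    by_contra hnot
    refine hf K hK ?_
    intro u hu hor
    rw [forces_bigOr] at hor
    obtain ⟨χ, hχ, hfχ⟩ := hor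
    rw [List.mem_map] at hχ
    obtain ⟨i', hi', rfl⟩ := hχ
    have : i' = i := theta_excl hfχ (persist hU _ hu hθ)
    subst this
    exact hnot (Finset.mem_toList.1 hi')
  · intro hsub v hv hneg
    obtain ⟨i, K, hK, hθ⟩ := theta_live U v
    have hiI : i ∈ I := hsub (fs_mono hv (mem_fs.2 ⟨K, hK, hθ⟩))
    refine hneg K hK ?_
    rw [forces_bigOr]
    exact ⟨theta n i, List.mem_map_of_mem (Finset.mem_toList.2 hiI), hθ⟩

open Classical in
/-- the substitution: σ(p) = ⋁_{I ∈ V(p)} ¬¬⋁_{i∈I} θ_i -/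
noncomputable def sigmaV (n : ℕ) (V : ℕ → Set (Med n)) (p : ℕ) : Form :=
  bigOr' (((Finset.univ : Finset (Med n)).filter (fun I => I ∈ V p)).toList.map
    (fun I => dn (bigOr' (I.1.toList.map (theta n)))))

lemma forces_sigmaV {U V : ℕ → Set (Med n)} (hU : IsVal U) (hV : IsVal V) (p : ℕ) (J : Med n) :
    forces U J (sigmaV n V p) ↔ hmap U J ∈ V p := by
  classical
  unfold sigmaV
  rw [forces_bigOr]
  constructor
  · rintro ⟨χ, hχ, hfχ⟩
    rw [List.mem_map] at hχ
    obtain ⟨I, hI, rfl⟩ := hχ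
    rw [Finset.mem_toList, Finset.mem_filter] at hI
    have hsub : fs U J ⊆ I.1 := (forces_alpha hU J I.1).1 hfχ
    exact hV p I (hmap U J) hsub hI.2
  · intro hmem
    refine ⟨_, List.mem_map_of_mem
      (Finset.mem_toList.2 (Finset.mem_filter.2 ⟨Finset.mem_univ _, hmem⟩)), ?_⟩
    exact (forces_alpha hU J (hmap U J).1).2 (subset_refl _)

lemma hmap_back {U : ℕ → Set (Med n)} (hU : IsVal U) (x v : Med n) (h : hmap U x ≤ v) :
    ∃ y, x ≤ y ∧ hmap U y = v := by
  classical
  have hsub : v.1 ⊆ fs U x := h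
  have wit : ∀ i : {i // i ∈ v.1}, ∃ K, x ≤ K ∧ forces U K (theta n i.1) :=
    fun i => mem_fs.1 (hsub i.2)
  choose K hK1 hK2 using wit
  obtain ⟨i0, hi0⟩ := v.2
  have hne : (v.1.attach.biUnion fun i => (K i).1).Nonempty := by
    obtain ⟨a, ha⟩ := (K ⟨i0, hi0⟩).2
    exact ⟨a, Finset.mem_biUnion.2 ⟨⟨i0, hi0⟩, Finset.mem_attach _ _, ha⟩⟩
  refine ⟨⟨_, hne⟩, ?_, ?_⟩
  · intro a ha
    obtain ⟨i, _, hai⟩ := Finset.mem_biUnion.1 ha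
    exact hK1 i hai
  · apply Subtype.ext
    apply Finset.Subset.antisymm
    · intro j hj
      obtain ⟨K', hK'le, hK'f⟩ := mem_fs.1 hj
      obtain ⟨a, ha⟩ := K'.2
      obtain ⟨i, _, hai⟩ := Finset.mem_biUnion.1 (hK'le ha)
      set K'' : Med n := ⟨K'.1 ∩ (K i).1, ⟨a, Finset.mem_inter.2 ⟨ha, hai⟩⟩⟩ with hK''
      have h1 : K' ≤ K'' := Finset.inter_subset_left
      have h2 : K i ≤ K'' := Finset.inter_subset_right
      have hj' : forces U K'' (theta n j) := persist hU _ h1 hK'f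
      have hi' : forces U K'' (theta n i.1) := persist hU _ h2 (hK2 i)
      have : j = i.1 := theta_excl hj' hi'
      subst this
      exact i.2
    · intro i hi
      refine mem_fs.2 ⟨K ⟨i, hi⟩, ?_, hK2 _⟩
      intro a ha
      exact Finset.mem_biUnion.2 ⟨⟨i, hi⟩, Finset.mem_attach _ _, ha⟩

lemma fs_U0 (J : Med n) : fs (U0 n) J = J.1 := by
  ext i
  rw [mem_fs]
  constructor
  · rintro ⟨K, hK, hf⟩
    have := forces_theta_U0.1 hf
    subst this
    exact hK (Finset.mem_singleton_self i)
  · intro hi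
    exact ⟨sing i, le_sing hi, forces_theta_U0.2 rfl⟩

lemma hmap_U0 (J : Med n) : hmap (U0 n) J = J := Subtype.ext (fs_U0 J)

lemma root_le (x : Med n) (hn : 1 ≤ n) : root n hn ≤ x := Finset.subset_univ x.1

end S17

open S17

/-- Structural completeness of the logic of F_n. -/
theorem stmt17 (n : ℕ) (hn : 1 ≤ n) (φ ψ : Form)
    (h : ∀ σ : ℕ → Form,
      valid (root n hn) (φ.subst σ) → valid (root n hn) (ψ.subst σ)) :
    valid (root n hn) (φ.imp ψ) := by
  have core : ∀ V : ℕ → Set (Med n), IsVal V →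
      forces V (root n hn) φ → forces V (root n hn) ψ := by
    intro V hV hφ
    have hval : valid (root n hn) (φ.subst (sigmaV n V)) := by
      intro U hU
      rw [forces_subst]
      rw [transfer (hmap U) (fun p => {v | forces U v (sigmaV n V p)}) V
        (fun h => hmap_mono h) (fun p x => forces_sigmaV hU hV p x) (hmap_back hU)
        φ (root n hn)]
      exact persist hV φ (root_le _ hn) hφ
    have hψv := h (sigmaV n V) hval (U0 n) isVal_U0
    rw [forces_subst] at hψv
    rw [transfer (hmap (U0 n)) (fun p => {v | forces (U0 n) v (sigmaV n V p)}) V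
      (fun h => hmap_mono h) (fun p x => forces_sigmaV isVal_U0 hV p x)
      (hmap_back isVal_U0) ψ (root n hn)] at hψv
    rwa [hmap_U0] at hψv
  intro V hV
  intro w _ hφ
  classical
  obtain ⟨d, hd⟩ := w.2
  set t : Fin n → Fin n := fun j => if j ∈ w.1 then j else d with ht
  have htw : ∀ j, t j ∈ w.1 := by
    intro j; by_cases hj : j ∈ w.1 <;> simp [ht, hj, hd]
  set g : Med n → Med n := fun J => ⟨J.1.image t, J.2.image t⟩ with hg
  have gmono : ∀ {x y : Med n}, x ≤ y → g x ≤ g y := by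
    intro x y hxy; exact Finset.image_subset_image hxy
  have gback : ∀ (x v : Med n), g x ≤ v → ∃ y, x ≤ y ∧ g y = v := by
    intro x v hv
    have hsub : v.1 ⊆ x.1.image t := hv
    have hne : (x.1.filter (fun j => t j ∈ v.1)).Nonempty := by
      obtain ⟨b, hb⟩ := v.2
      obtain ⟨j, hj, hjb⟩ := Finset.mem_image.1 (hsub hb)
      exact ⟨j, Finset.mem_filter.2 ⟨hj, by rwa [hjb]⟩⟩
    refine ⟨⟨_, hne⟩, Finset.filter_subset _ _, Subtype.ext ?_⟩
    apply Finset.Subset.antisymm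
    · intro b hb
      obtain ⟨j, hj, hjb⟩ := Finset.mem_image.1 hb
      obtain ⟨hj1, hj2⟩ := Finset.mem_filter.1 hj
      rwa [← hjb]
    · intro b hb
      obtain ⟨j, hj, hjb⟩ := Finset.mem_image.1 (hsub hb)
      exact Finset.mem_image.2 ⟨j, Finset.mem_filter.2 ⟨hj, by rwa [hjb]⟩, hjb⟩
  have groot : g (root n hn) = w := by
    apply Subtype.ext
    apply Finset.Subset.antisymm
    · intro b hb
      obtain ⟨j, _, hjb⟩ := Finset.mem_image.1 hb
      rw [← hjb]; exact htw j
    · intro b hb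
      exact Finset.mem_image.2 ⟨b, Finset.mem_univ _, by simp [ht, hb]⟩
  set V' : ℕ → Set (Med n) := fun p => {J | g J ∈ V p} with hV'
  have hV'val : IsVal V' := fun p x y hxy hx => hV p _ _ (gmono hxy) hx
  have htr := transfer g V' V gmono (fun p x => Iff.rfl) gback
  have h1 : forces V' (root n hn) φ := (htr φ _).2 (by rw [groot]; exact hφ)
  have h2 := core V' hV'val h1
  have h3 := (htr ψ _).1 h2
  rwa [groot] at h3
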